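/- arXiv:2006.08099 — 4 statements merged into one kernel-verified Lean document; each statement's English description precedes it below -/
import Mathlib

section
/- (Lemma 1.) Suppose V** = (V_1**,…,V_K**) is a precoder with P(V**) > 0 such that R̃(V**) ≥ R̃(V) for every precoder V with P(V) > 0 (i.e., V** globally maximizes the unconstrained power-normalized sum-rate). Set α = √(P_T / P(V**)) and let αV** = (αV_1**,…,αV_K**). Then P(αV**) = P_T, and for every precoder V with P(V) ≤ P_T one has R(V) ≤ R(αV**); that is, αV** globally maximizes the sum-rate R subject to the power constraint P(V) ≤ P_T. -/
/-!
Write each user's rate as `log det (tI + A + B) - log det (tI + A)`, with interference `A`,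
signal `B` and noise power `t`. Splitting `B` into rank-one terms `w wᴴ`, each term adds
`log (1 + wᴴ (tI + A')⁻¹ w)` by the matrix determinant lemma, and `t ↦ (tI + A')⁻¹` is
antitone in the Loewner order; so the rate is nonnegative and antitone in `t`. Hence
`R(V) ≤ R̃(V)` when `0 < P(V) ≤ P_T`. Scaling the precoder by `c` and the noise by `c²` scales
every determinant by the same factor, so `R(α V**) = R̃(V**)`, and
`R(V) ≤ R̃(V) ≤ R̃(V**) = R(α V**)`.
-/

open Matrix Finset
open scoped Matrix

/-- Total transmit power `P(V) = Σₖ Re Tr(Vₖ Vₖᴴ)`. -/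
noncomputable def totalPower {K Nt d : ℕ}
    (V : Fin K → Matrix (Fin Nt) (Fin d) ℂ) : ℝ :=
  ∑ k : Fin K, (Matrix.trace (V k * (V k)ᴴ)).re

/-- Interference-plus-signal covariance `Σ_{m ∈ S} Hₖ Vₘ Vₘᴴ Hₖᴴ`. -/
noncomputable def covSum {K Nt Nr d : ℕ}
    (H : Matrix (Fin Nr) (Fin Nt) ℂ) (V : Fin K → Matrix (Fin Nt) (Fin d) ℂ)
    (S : Finset (Fin K)) : Matrix (Fin Nr) (Fin Nr) ℂ :=
  ∑ m ∈ S, H * V m * (V m)ᴴ * Hᴴ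

/-- Generic weighted sum-rate with per-user noise levels `τ k` in place of `σₖ²`:
`Σₖ ωₖ [log det(τₖ I + Σₘ Hₖ Vₘ Vₘᴴ Hₖᴴ) − log det(τₖ I + Σ_{m≠k} Hₖ Vₘ Vₘᴴ Hₖᴴ)]`. -/
noncomputable def sumRateGen {K Nt Nr d : ℕ}
    (H : Fin K → Matrix (Fin Nr) (Fin Nt) ℂ) (ω : Fin K → ℝ) (τ : Fin K → ℝ)
    (V : Fin K → Matrix (Fin Nt) (Fin d) ℂ) : ℝ :=
  ∑ k : Fin K, ω k *
    (Real.log ((τ k : ℂ) • (1 : Matrix (Fin Nr) (Fin Nr) ℂ) + covSum (H k) V Finset.univ).det.re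
      - Real.log ((τ k : ℂ) • (1 : Matrix (Fin Nr) (Fin Nr) ℂ)
          + covSum (H k) V (Finset.univ.erase k)).det.re)

/-- The sum-rate `R(V)` of the power-constrained problem. -/
noncomputable def sumRate {K Nt Nr d : ℕ}
    (H : Fin K → Matrix (Fin Nr) (Fin Nt) ℂ) (ω σ : Fin K → ℝ)
    (V : Fin K → Matrix (Fin Nt) (Fin d) ℂ) : ℝ :=
  sumRateGen H ω (fun k => σ k ^ 2) V

/-- The power-normalized sum-rate `R̃(V)` of the unconstrained problem, in which
`σₖ²` is replaced by `σₖ² P(V)/P_T`. -/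
noncomputable def sumRateNorm {K Nt Nr d : ℕ}
    (H : Fin K → Matrix (Fin Nr) (Fin Nt) ℂ) (ω σ : Fin K → ℝ) (PT : ℝ)
    (V : Fin K → Matrix (Fin Nt) (Fin d) ℂ) : ℝ :=
  sumRateGen H ω (fun k => σ k ^ 2 * totalPower V / PT) V

open scoped ComplexOrder

namespace Matrix

theorem re_trace_mul_conjTranspose_self_nonneg {m n : Type*} [Fintype m] [Fintype n]
    (A : Matrix m n ℂ) : 0 ≤ (A * Aᴴ).trace.re :=
  (Complex.nonneg_iff.mp (posSemidef_self_mul_conjTranspose A).trace_nonneg).1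

theorem re_trace_mul_conjTranspose_self_eq_zero_iff {m n : Type*} [Fintype m] [Fintype n]
    {A : Matrix m n ℂ} : (A * Aᴴ).trace.re = 0 ↔ A = 0 := by
  have him := (Complex.nonneg_iff.mp (posSemidef_self_mul_conjTranspose A).trace_nonneg).2
  rw [← trace_mul_conjTranspose_self_eq_zero_iff, Complex.ext_iff, ← him]
  simp

variable {n : Type*} [Fintype n] [DecidableEq n]

theorem det_add_vecMulVec {R : Type*} [CommRing R] {A : Matrix n n R} (hA : IsUnit A.det)
    (u v : n → R) : (A + vecMulVec u v).det = A.det * (1 + v ⬝ᵥ A⁻¹ *ᵥ u) := by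
  rw [vecMulVec_eq Unit, det_add_replicateCol_mul_replicateRow hA, det_unique (n := Unit),
    add_apply, one_apply_eq, ← replicateRow_vecMul, replicateRow_mul_replicateCol_apply,
    dotProduct_mulVec]

theorem PosDef.re_det_add_vecMulVec_star {A : Matrix n n ℂ} (hA : A.PosDef) (w : n → ℂ) :
    (A + vecMulVec w (star w)).det.re = A.det.re * (1 + (star w ⬝ᵥ A⁻¹ *ᵥ w).re) := by
  have him : A.det.im = 0 := (Complex.pos_iff.mp hA.det_pos).2.symm
  rw [det_add_vecMulVec hA.det_pos.ne'.isUnit w, Complex.mul_re, him]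
  simp

theorem PosDef.star_dotProduct_inv_mulVec_le {A B : Matrix n n ℂ} (hA : A.PosDef)
    (hAB : (B - A).PosSemidef) (w : n → ℂ) :
    star w ⬝ᵥ B⁻¹ *ᵥ w ≤ star w ⬝ᵥ A⁻¹ *ᵥ w := by
  open scoped MatrixOrder Matrix.Norms.L2Operator in
  have hinv : B⁻¹ ≤ A⁻¹ := by
    rw [nonsing_inv_eq_ringInverse, nonsing_inv_eq_ringInverse]
    exact CStarAlgebra.ringInverse_le_ringInverse (le_iff.mpr hAB)
      (isStrictlyPositive_iff_posDef.mpr hA)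
  have := (le_iff.mp hinv).dotProduct_mulVec_nonneg w
  rwa [sub_mulVec, dotProduct_sub, sub_nonneg] at this

omit [Fintype n] in
theorem posDef_smul_one_add {t : ℝ} (ht : 0 < t) {A : Matrix n n ℂ} (hA : A.PosSemidef) :
    ((t : ℂ) • 1 + A).PosDef :=
  (PosDef.one.smul (Complex.zero_lt_real.mpr ht)).add_posSemidef hA

omit [DecidableEq n] in
theorem PosSemidef.induction_on_vecMulVec_star {P : Matrix n n ℂ → Matrix n n ℂ → Prop}
    {A B : Matrix n n ℂ} (hA : A.PosSemidef) (hB : B.PosSemidef) (zero : ∀ A, P A 0)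
    (rankOne : ∀ A w, A.PosSemidef → P A (vecMulVec w (star w)))
    (add : ∀ A B C, P A B → P (A + B) C → P A (B + C)) : P A B := by
  obtain ⟨m, w, rfl⟩ := posSemidef_iff_eq_sum_vecMulVec.mp hB
  clear hB
  induction (univ : Finset (Fin m)) using Finset.induction_on generalizing A with
  | empty => exact zero A
  | insert a S ha ih =>
    rw [sum_insert ha]
    exact add _ _ _ (rankOne A (w a) hA) (ih (hA.add (posSemidef_vecMulVec_self_star _)))

end Matrix

section LogDetGain

variable {n : Type*} [Fintype n] [DecidableEq n]

/-- The rate of a user with received signal covariance `B`, interference covariance `A` and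
noise power `t`. -/
noncomputable def logDetGain (A B : Matrix n n ℂ) (t : ℝ) : ℝ :=
  Real.log ((t : ℂ) • 1 + (A + B)).det.re - Real.log ((t : ℂ) • 1 + A).det.re

theorem logDetGain_zero (A : Matrix n n ℂ) : logDetGain A 0 = 0 := by
  ext t
  simp [logDetGain]

theorem logDetGain_add (A B C : Matrix n n ℂ) :
    logDetGain A (B + C) = logDetGain A B + logDetGain (A + B) C := by
  ext t
  simp only [logDetGain, Pi.add_apply, add_assoc]
  ring

theorem logDetGain_vecMulVec_star {A : Matrix n n ℂ} (hA : A.PosSemidef) {t : ℝ} (ht : 0 < t)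
    (w : n → ℂ) :
    logDetGain A (vecMulVec w (star w)) t
      = Real.log (1 + (star w ⬝ᵥ ((t : ℂ) • 1 + A)⁻¹ *ᵥ w).re) := by
  have hY := posDef_smul_one_add ht hA
  have hq : 0 ≤ (star w ⬝ᵥ ((t : ℂ) • 1 + A)⁻¹ *ᵥ w).re :=
    hY.inv.posSemidef.re_dotProduct_nonneg w
  rw [logDetGain, ← add_assoc, hY.re_det_add_vecMulVec_star,
    Real.log_mul (Complex.pos_iff.mp hY.det_pos).1.ne' (by positivity)]
  ring

theorem logDetGain_nonneg {A B : Matrix n n ℂ} (hA : A.PosSemidef) (hB : B.PosSemidef) {t : ℝ}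
    (ht : 0 < t) : 0 ≤ logDetGain A B t := by
  refine PosSemidef.induction_on_vecMulVec_star (P := fun A B => 0 ≤ logDetGain A B t) hA hB
    (fun A => by simp [logDetGain_zero]) (fun A w hA => ?_) (fun A B C hAB hABC => ?_)
  · rw [logDetGain_vecMulVec_star hA ht]
    exact Real.log_nonneg (le_add_of_nonneg_right
      ((posDef_smul_one_add ht hA).inv.posSemidef.re_dotProduct_nonneg w))
  · rw [logDetGain_add]
    exact add_nonneg hAB hABC

theorem antitoneOn_logDetGain {A B : Matrix n n ℂ} (hA : A.PosSemidef) (hB : B.PosSemidef) :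
    AntitoneOn (logDetGain A B) (Set.Ioi 0) := by
  refine PosSemidef.induction_on_vecMulVec_star
    (P := fun A B => AntitoneOn (logDetGain A B) (Set.Ioi 0)) hA hB
    (fun A => by rw [logDetGain_zero]; exact antitoneOn_const) (fun A w hA => ?_)
    (fun A B C hAB hABC => ?_)
  · intro s hs t ht hst
    have hsA := posDef_smul_one_add hs hA
    have hdiff : ((t : ℂ) • 1 + A - ((s : ℂ) • 1 + A)).PosSemidef := by
      rw [add_sub_add_right_eq_sub, ← sub_smul, ← Complex.ofReal_sub]
      exact PosSemidef.one.smul (Complex.zero_le_real.mpr (sub_nonneg.mpr hst))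
    have hq := Complex.le_def.mp (hsA.star_dotProduct_inv_mulVec_le hdiff w)
    have hq0 := (posDef_smul_one_add ht hA).inv.posSemidef.re_dotProduct_nonneg w
    rw [logDetGain_vecMulVec_star hA ht, logDetGain_vecMulVec_star hA hs]
    exact Real.log_le_log (by positivity) (by linarith [hq.1])
  · rw [logDetGain_add]
    exact hAB.add hABC

theorem logDetGain_smul {A B : Matrix n n ℂ} (hA : A.PosSemidef) (hB : B.PosSemidef) {t : ℝ}
    (ht : 0 < t) {c : ℝ} (hc : c ≠ 0) :
    logDetGain ((c : ℂ) • A) ((c : ℂ) • B) (c * t) = logDetGain A B t := by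
  have hdet : ∀ C : Matrix n n ℂ, C.PosSemidef →
      Real.log ((↑(c * t) : ℂ) • 1 + (c : ℂ) • C).det.re
        = Fintype.card n * Real.log |c| + Real.log ((t : ℂ) • 1 + C).det.re := by
    intro C hC
    rw [Complex.ofReal_mul, mul_smul, ← smul_add, det_smul, ← Complex.ofReal_pow,
      Complex.re_ofReal_mul, Real.log_mul (pow_ne_zero _ hc)
        (Complex.pos_iff.mp (posDef_smul_one_add ht hC).det_pos).1.ne', Real.log_pow,
      Real.log_abs]
  rw [logDetGain, logDetGain, ← smul_add, hdet _ (hA.add hB), hdet _ hA]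
  ring

end LogDetGain

section SumRate

variable {K Nt Nr d : ℕ}

theorem covSum_posSemidef (H : Matrix (Fin Nr) (Fin Nt) ℂ)
    (V : Fin K → Matrix (Fin Nt) (Fin d) ℂ) (S : Finset (Fin K)) : (covSum H V S).PosSemidef :=
  posSemidef_sum S fun m _ => by
    simpa only [conjTranspose_mul, Matrix.mul_assoc] using
      posSemidef_self_mul_conjTranspose (H * V m)

theorem covSum_smul (H : Matrix (Fin Nr) (Fin Nt) ℂ) (V : Fin K → Matrix (Fin Nt) (Fin d) ℂ)
    (c : ℝ) (S : Finset (Fin K)) :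
    covSum H (fun m => (c : ℂ) • V m) S = (↑(c ^ 2) : ℂ) • covSum H V S := by
  simp only [covSum, smul_sum, conjTranspose_smul, Complex.star_def, Complex.conj_ofReal,
    Matrix.mul_smul, Matrix.smul_mul, smul_smul, sq, Complex.ofReal_mul]

theorem sumRateGen_eq_sum_logDetGain (H : Fin K → Matrix (Fin Nr) (Fin Nt) ℂ)
    (ω τ : Fin K → ℝ) (V : Fin K → Matrix (Fin Nt) (Fin d) ℂ) :
    sumRateGen H ω τ V = ∑ k, ω k *
      logDetGain (covSum (H k) V (univ.erase k)) (covSum (H k) V {k}) (τ k) := by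
  simp only [sumRateGen, logDetGain, covSum, sum_singleton, sum_erase_add _ _ (mem_univ _)]

theorem sumRateGen_zero (H : Fin K → Matrix (Fin Nr) (Fin Nt) ℂ) (ω τ : Fin K → ℝ) :
    sumRateGen H ω τ (0 : Fin K → Matrix (Fin Nt) (Fin d) ℂ) = 0 := by
  simp [sumRateGen_eq_sum_logDetGain, covSum, logDetGain_zero]

theorem sumRateGen_nonneg (H : Fin K → Matrix (Fin Nr) (Fin Nt) ℂ) {ω τ : Fin K → ℝ}
    (hω : ∀ k, 0 ≤ ω k) (hτ : ∀ k, 0 < τ k) (V : Fin K → Matrix (Fin Nt) (Fin d) ℂ) :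
    0 ≤ sumRateGen H ω τ V := by
  rw [sumRateGen_eq_sum_logDetGain]
  exact sum_nonneg fun k _ => mul_nonneg (hω k)
    (logDetGain_nonneg (covSum_posSemidef _ _ _) (covSum_posSemidef _ _ _) (hτ k))

theorem sumRateGen_le_of_le (H : Fin K → Matrix (Fin Nr) (Fin Nt) ℂ) {ω τ τ' : Fin K → ℝ}
    (hω : ∀ k, 0 ≤ ω k) (hτ : ∀ k, 0 < τ k) (hττ' : ∀ k, τ k ≤ τ' k)
    (V : Fin K → Matrix (Fin Nt) (Fin d) ℂ) :
    sumRateGen H ω τ' V ≤ sumRateGen H ω τ V := by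
  rw [sumRateGen_eq_sum_logDetGain, sumRateGen_eq_sum_logDetGain]
  exact sum_le_sum fun k _ => mul_le_mul_of_nonneg_left
    (antitoneOn_logDetGain (covSum_posSemidef _ _ _) (covSum_posSemidef _ _ _) (hτ k)
      ((hτ k).trans_le (hττ' k)) (hττ' k)) (hω k)

theorem sumRateGen_smul (H : Fin K → Matrix (Fin Nr) (Fin Nt) ℂ) (ω : Fin K → ℝ)
    {τ : Fin K → ℝ} (hτ : ∀ k, 0 < τ k) (V : Fin K → Matrix (Fin Nt) (Fin d) ℂ) {c : ℝ}
    (hc : c ≠ 0) :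
    sumRateGen H ω (fun k => c ^ 2 * τ k) (fun m => (c : ℂ) • V m) =
      sumRateGen H ω τ V := by
  simp only [sumRateGen_eq_sum_logDetGain, covSum_smul]
  exact sum_congr rfl fun k _ => by
    rw [logDetGain_smul (covSum_posSemidef _ _ _) (covSum_posSemidef _ _ _) (hτ k)
      (pow_ne_zero 2 hc)]

theorem totalPower_nonneg (V : Fin K → Matrix (Fin Nt) (Fin d) ℂ) : 0 ≤ totalPower V :=
  sum_nonneg fun k _ => re_trace_mul_conjTranspose_self_nonneg (V k)

theorem totalPower_eq_zero_iff {V : Fin K → Matrix (Fin Nt) (Fin d) ℂ} :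
    totalPower V = 0 ↔ V = 0 := by
  rw [totalPower, sum_eq_zero_iff_of_nonneg fun k _ => re_trace_mul_conjTranspose_self_nonneg (V k),
    funext_iff]
  simp [re_trace_mul_conjTranspose_self_eq_zero_iff]

theorem totalPower_smul (c : ℝ) (V : Fin K → Matrix (Fin Nt) (Fin d) ℂ) :
    totalPower (fun k => (c : ℂ) • V k) = c ^ 2 * totalPower V := by
  simp only [totalPower, mul_sum, conjTranspose_smul, Complex.star_def, Complex.conj_ofReal,
    Matrix.mul_smul, Matrix.smul_mul, smul_smul, trace_smul, smul_eq_mul, ← Complex.ofReal_mul,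
    Complex.re_ofReal_mul, sq]

theorem sumRate_le_sumRateNorm (H : Fin K → Matrix (Fin Nr) (Fin Nt) ℂ) {ω σ : Fin K → ℝ}
    {PT : ℝ} (hω : ∀ k, 0 ≤ ω k) (hσ : ∀ k, σ k ≠ 0) (hPT : 0 < PT)
    {V : Fin K → Matrix (Fin Nt) (Fin d) ℂ} (hV : 0 < totalPower V)
    (hVPT : totalPower V ≤ PT) :
    sumRate H ω σ V ≤ sumRateNorm H ω σ PT V :=
  sumRateGen_le_of_le H hω (fun k => by have := hσ k; positivity)
    (fun k => div_le_of_le_mul₀ hPT.le (sq_nonneg _)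
      (mul_le_mul_of_nonneg_left hVPT (sq_nonneg _))) V

theorem sumRate_smul_sqrt_eq_sumRateNorm (H : Fin K → Matrix (Fin Nr) (Fin Nt) ℂ)
    (ω : Fin K → ℝ) {σ : Fin K → ℝ} {PT : ℝ} (hσ : ∀ k, σ k ≠ 0) (hPT : 0 < PT)
    {V : Fin K → Matrix (Fin Nt) (Fin d) ℂ} (hV : 0 < totalPower V) :
    sumRate H ω σ (fun k => (Real.sqrt (PT / totalPower V) : ℂ) • V k)
      = sumRateNorm H ω σ PT V := by
  have hα : Real.sqrt (PT / totalPower V) ^ 2 = PT / totalPower V := Real.sq_sqrt (by positivity)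
  rw [sumRateNorm, ← sumRateGen_smul H ω (fun k => by have := hσ k; positivity) V
    (Real.sqrt_pos.2 (div_pos hPT hV)).ne', sumRate]
  congr 1
  funext k
  rw [hα]
  field_simp

end SumRate

theorem scaled_unconstrained_maximizer_solves_constrained_general
    (K Nt Nr d : ℕ)
    (H : Fin K → Matrix (Fin Nr) (Fin Nt) ℂ) (ω σ : Fin K → ℝ) (PT : ℝ)
    (hω : ∀ k, 0 < ω k) (hσ : ∀ k, 0 < σ k) (hPT : 0 < PT)
    (Vss : Fin K → Matrix (Fin Nt) (Fin d) ℂ)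
    (hVss : 0 < totalPower Vss)
    (hmax : ∀ V : Fin K → Matrix (Fin Nt) (Fin d) ℂ,
      0 < totalPower V → sumRateNorm H ω σ PT V ≤ sumRateNorm H ω σ PT Vss) :
    totalPower (fun k => (Real.sqrt (PT / totalPower Vss) : ℂ) • Vss k) = PT ∧
    ∀ V : Fin K → Matrix (Fin Nt) (Fin d) ℂ, totalPower V ≤ PT →
      sumRate H ω σ V ≤
        sumRate H ω σ (fun k => (Real.sqrt (PT / totalPower Vss) : ℂ) • Vss k) := by
  have hω' : ∀ k, 0 ≤ ω k := fun k => (hω k).le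
  have hσ' : ∀ k, σ k ≠ 0 := fun k => (hσ k).ne'
  refine ⟨?_, fun V hVPT => ?_⟩
  · rw [totalPower_smul, Real.sq_sqrt (div_pos hPT hVss).le, div_mul_cancel₀ _ hVss.ne']
  rcases (totalPower_nonneg V).eq_or_lt with hV | hV
  · rw [totalPower_eq_zero_iff.mp hV.symm, sumRate, sumRateGen_zero]
    exact sumRateGen_nonneg H hω' (fun k => pow_pos (hσ k) 2) _
  · calc sumRate H ω σ V
        _ ≤ sumRateNorm H ω σ PT V := sumRate_le_sumRateNorm H hω' hσ' hPT hV hVPT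
        _ ≤ sumRateNorm H ω σ PT Vss := hmax V hV
        _ = _ := (sumRate_smul_sqrt_eq_sumRateNorm H ω hσ' hPT hVss).symm

/-- Lemma 1: if `V**` globally maximizes the unconstrained power-normalized
sum-rate `R̃` among precoders of positive power, then `α V**` with
`α = √(P_T / P(V**))` satisfies the power constraint with equality and globally
maximizes the sum-rate `R` subject to `P(V) ≤ P_T`. -/
theorem scaled_unconstrained_maximizer_solves_constrained
    (K Nt Nr d : ℕ) (hK : 1 ≤ K) (hNt : 1 ≤ Nt) (hNr : 1 ≤ Nr) (hd : 1 ≤ d)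
    (H : Fin K → Matrix (Fin Nr) (Fin Nt) ℂ) (ω σ : Fin K → ℝ) (PT : ℝ)
    (hω : ∀ k, 0 < ω k) (hσ : ∀ k, 0 < σ k) (hPT : 0 < PT)
    (Vss : Fin K → Matrix (Fin Nt) (Fin d) ℂ)
    (hVss : 0 < totalPower Vss)
    (hmax : ∀ V : Fin K → Matrix (Fin Nt) (Fin d) ℂ,
      0 < totalPower V → sumRateNorm H ω σ PT V ≤ sumRateNorm H ω σ PT Vss) :
    totalPower (fun k => (Real.sqrt (PT / totalPower Vss) : ℂ) • Vss k) = PT ∧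
    ∀ V : Fin K → Matrix (Fin Nt) (Fin d) ℂ, totalPower V ≤ PT →
      sumRate H ω σ V ≤
        sumRate H ω σ (fun k => (Real.sqrt (PT / totalPower Vss) : ℂ) • Vss k) :=
  scaled_unconstrained_maximizer_solves_constrained_general K Nt Nr d H ω σ PT hω hσ hPT Vss hVss
    hmax
end

section
/- (Optimality of the W-update in the iterative WMMSE algorithm.) Let E, W ∈ ℂ^{n×n} be Hermitian positive definite matrices, so that Re Tr(WE) is a positive real and det W, det E are positive reals. Then Re Tr(W·E) − log det W ≥ n + log det E, with equality if and only if W = E⁻¹. Consequently, W = E⁻¹ is the unique minimizer of W ↦ Re Tr(W·E) − log det W over Hermitian positive definite matrices W. -/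
/-!
Write `W = Bᴴ B` with `B` invertible. Then `M = B E Bᴴ` is positive definite, has the trace and
determinant of `W E`, and `M = 1` iff `W E = 1`. In terms of the eigenvalues `λᵢ > 0` of `M`,
`Re Tr M − log det M = ∑ᵢ (λᵢ − log λᵢ) ≥ n` because `log x ≤ x − 1`, with equality iff all
`λᵢ = 1`, i.e. iff `M = 1`. Finally `log det (W E) = log det W + log det E`.
-/

open Matrix
open scoped Matrix ComplexOrder

namespace Real

lemma one_le_sub_log {x : ℝ} (hx : 0 < x) : 1 ≤ x - log x := by
  linarith [log_le_sub_one_of_pos hx]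

lemma sub_log_eq_one_iff {x : ℝ} (hx : 0 < x) : x - log x = 1 ↔ x = 1 := by
  refine ⟨fun h ↦ ?_, fun h ↦ by simp [h]⟩
  by_contra hne
  linarith [log_lt_sub_one_of_pos hx hne]

variable {ι : Type*} [Fintype ι] {x : ι → ℝ}

lemma card_le_sum_sub_log (hx : ∀ i, 0 < x i) :
    (Fintype.card ι : ℝ) ≤ ∑ i, (x i - log (x i)) := by
  simpa using Finset.card_nsmul_le_sum Finset.univ _ 1 fun i _ ↦ one_le_sub_log (hx i)

lemma sum_sub_log_eq_card_iff (hx : ∀ i, 0 < x i) :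
    ∑ i, (x i - log (x i)) = Fintype.card ι ↔ x = 1 := by
  have hle : ∀ i ∈ Finset.univ, (1 : ℝ) ≤ x i - log (x i) := fun i _ ↦ one_le_sub_log (hx i)
  rw [eq_comm, ← Finset.card_univ, ← nsmul_one, ← Finset.sum_const, Finset.sum_eq_sum_iff_of_le hle]
  simp [eq_comm (a := (1 : ℝ)), sub_log_eq_one_iff (hx _), funext_iff]

end Real

namespace Matrix

lemma mul_eq_one_iff_eq_nonsing_inv {n α : Type*} [Fintype n] [DecidableEq n] [CommRing α]
    {A B : Matrix n n α} (hB : IsUnit B.det) : A * B = 1 ↔ A = B⁻¹ :=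
  ⟨fun h ↦ (inv_eq_left_inv h).symm, fun h ↦ h ▸ nonsing_inv_mul B hB⟩

variable {𝕜 ι : Type*} [RCLike 𝕜] [Fintype ι] [DecidableEq ι]

lemma IsHermitian.eq_one_of_eigenvalues_eq_one {A : Matrix ι ι 𝕜} (hA : A.IsHermitian)
    (h : hA.eigenvalues = 1) : A = 1 := by
  rw [hA.spectral_theorem, h]
  simp [Function.comp_def]

namespace PosDef

variable {M W E : Matrix ι ι 𝕜}

lemma re_det_pos (hM : M.PosDef) : 0 < RCLike.re M.det := (RCLike.pos_iff.mp hM.det_pos).1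

lemma log_re_det_mul (hW : W.PosDef) (hE : E.PosDef) :
    Real.log (RCLike.re (W * E).det) =
      Real.log (RCLike.re W.det) + Real.log (RCLike.re E.det) := by
  rw [det_mul, RCLike.mul_re, (RCLike.pos_iff.mp hW.det_pos).2, zero_mul, sub_zero,
    Real.log_mul hW.re_det_pos.ne' hE.re_det_pos.ne']

lemma re_trace_sub_log_re_det_eq_sum (hM : M.PosDef) :
    RCLike.re M.trace - Real.log (RCLike.re M.det) =
      ∑ i, (hM.1.eigenvalues i - Real.log (hM.1.eigenvalues i)) := by
  rw [hM.1.trace_eq_sum_eigenvalues, hM.1.det_eq_prod_eigenvalues, ← RCLike.ofReal_prod,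
    RCLike.ofReal_re, Real.log_prod fun i _ ↦ (hM.eigenvalues_pos i).ne', Finset.sum_sub_distrib]
  simp

lemma card_le_re_trace_sub_log_re_det (hM : M.PosDef) :
    (Fintype.card ι : ℝ) ≤ RCLike.re M.trace - Real.log (RCLike.re M.det) := by
  rw [hM.re_trace_sub_log_re_det_eq_sum]
  exact Real.card_le_sum_sub_log hM.eigenvalues_pos

lemma re_trace_sub_log_re_det_eq_card_iff (hM : M.PosDef) :
    RCLike.re M.trace - Real.log (RCLike.re M.det) = Fintype.card ι ↔ M = 1 := by
  refine ⟨fun h ↦ hM.1.eq_one_of_eigenvalues_eq_one ?_, fun h ↦ by simp [h]⟩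
  rwa [hM.re_trace_sub_log_re_det_eq_sum, Real.sum_sub_log_eq_card_iff hM.eigenvalues_pos] at h

open scoped MatrixOrder in
lemma exists_posDef_trace_det_eq_mul (hW : W.PosDef) (hE : E.PosDef) :
    ∃ M : Matrix ι ι 𝕜, M.PosDef ∧ M.trace = (W * E).trace ∧ M.det = (W * E).det ∧
      (M = 1 ↔ W * E = 1) := by
  obtain ⟨B, hB, rfl⟩ :=
    CStarAlgebra.isStrictlyPositive_iff_eq_star_mul_self.mp hW.isStrictlyPositive
  refine ⟨B * E * Bᴴ, hE.mul_mul_conjTranspose_same (vecMul_injective_of_isUnit hB), ?_, ?_, ?_⟩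
  · rw [trace_mul_cycle, star_eq_conjTranspose]
  · rw [det_mul_comm, ← mul_assoc, star_eq_conjTranspose]
  · rw [mul_eq_one_comm, ← mul_assoc, star_eq_conjTranspose]

lemma card_add_log_re_det_le_re_trace_mul_sub_log_re_det (hW : W.PosDef) (hE : E.PosDef) :
    Fintype.card ι + Real.log (RCLike.re E.det) ≤
      RCLike.re (W * E).trace - Real.log (RCLike.re W.det) := by
  obtain ⟨M, hM, htrace, hdet, -⟩ := exists_posDef_trace_det_eq_mul hW hE
  have := hM.card_le_re_trace_sub_log_re_det
  rw [htrace, hdet, log_re_det_mul hW hE] at this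
  linarith

lemma re_trace_mul_sub_log_re_det_eq_iff (hW : W.PosDef) (hE : E.PosDef) :
    RCLike.re (W * E).trace - Real.log (RCLike.re W.det) =
      Fintype.card ι + Real.log (RCLike.re E.det) ↔ W = E⁻¹ := by
  obtain ⟨M, hM, htrace, hdet, hone⟩ := exists_posDef_trace_det_eq_mul hW hE
  have := hM.re_trace_sub_log_re_det_eq_card_iff
  rw [htrace, hdet, log_re_det_mul hW hE, hone,
    mul_eq_one_iff_eq_nonsing_inv hE.det_pos.ne'.isUnit] at this
  rw [← this]
  constructor <;> intro <;> linarith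

end PosDef
end Matrix

/-- Optimality of the `W`-update of the iterative WMMSE algorithm: for Hermitian
positive definite `W, E`,
`Re Tr(W·E) − log det W ≥ n + log det E`, with equality iff `W = E⁻¹`.
Hence `W = E⁻¹` is the unique minimizer of `W ↦ Re Tr(W·E) − log det W`. -/
theorem wmmse_W_update_optimal (n : ℕ)
    (E W : Matrix (Fin n) (Fin n) ℂ) (hE : E.PosDef) (hW : W.PosDef) :
    (n : ℝ) + Real.log E.det.re
        ≤ (Matrix.trace (W * E)).re - Real.log W.det.re ∧
    ((Matrix.trace (W * E)).re - Real.log W.det.re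
        = (n : ℝ) + Real.log E.det.re ↔ W = E⁻¹) := by
  simpa using And.intro (hW.card_add_log_re_det_le_re_trace_mul_sub_log_re_det hE)
    (hW.re_trace_mul_sub_log_re_det_eq_iff hE)
end

section
/- (Optimality of the U-update in the iterative WMMSE algorithm, via completion of squares.) Let H ∈ ℂ^{N_r×N_t}, let V_1,…,V_K ∈ ℂ^{N_t×d}, fix k ∈ {1,…,K} and a real c > 0. Set A = cI + Σ_{m=1}^K H V_m V_mᴴ Hᴴ ∈ ℂ^{N_r×N_r}, which is Hermitian positive definite and hence invertible, and for U ∈ ℂ^{N_r×d} define E(U) = (I − Uᴴ H V_k)(I − Uᴴ H V_k)ᴴ + Σ_{m≠k} Uᴴ H V_m V_mᴴ Hᴴ U + c UᴴU. Then, with U* = A⁻¹ H V_k, for every U ∈ ℂ^{N_r×d} one has E(U) = E(U*) + (U − U*)ᴴ A (U − U*). Consequently, for every Hermitian positive semidefinite W ∈ ℂ^{d×d}, Re Tr(W·E(U)) ≥ Re Tr(W·E(U*)). -/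
/-!
Completing the square: with `B = H V_k`, the MSE matrix is `E(U) = I + (Uᴴ A U − Uᴴ B − Bᴴ U)`,
and since `A U* = B` with `A` Hermitian, the quadratic part splits as its value at `U*` plus
`(U − U*)ᴴ A (U − U*)`. The latter is positive semidefinite, and the trace of a product of two
positive semidefinite matrices is nonnegative.
-/

open Matrix Finset
open scoped Matrix ComplexOrder

namespace Matrix

section RCLike

variable {n 𝕜 : Type*} [Fintype n] [RCLike 𝕜]

theorem posDef_smul_one_add_sum_mul_conjTranspose [DecidableEq n] {ι p : Type*} [Fintype p]
    {c : 𝕜} (hc : 0 < c) (s : Finset ι) (B : ι → Matrix n p 𝕜) :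
    (c • (1 : Matrix n n 𝕜) + ∑ m ∈ s, B m * (B m)ᴴ).PosDef :=
  (PosDef.one.smul hc).add_posSemidef <|
    posSemidef_sum s fun m _ => posSemidef_self_mul_conjTranspose (B m)

theorem PosSemidef.trace_mul_nonneg {W P : Matrix n n 𝕜} (hW : W.PosSemidef)
    (hP : P.PosSemidef) : 0 ≤ (W * P).trace := by
  classical
  open scoped MatrixOrder in
  obtain ⟨S, rfl⟩ := CStarAlgebra.nonneg_iff_eq_star_mul_self.mp hP.nonneg
  rw [star_eq_conjTranspose, ← mul_assoc, trace_mul_comm, ← mul_assoc]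
  exact (hW.mul_mul_conjTranspose_same S).trace_nonneg

end RCLike

theorem IsHermitian.complete_square {n p α : Type*} [Fintype n] [CommRing α] [StarRing α]
    {A : Matrix n n α} (hA : A.IsHermitian) {B X₀ : Matrix n p α} (hX₀ : A * X₀ = B)
    (X : Matrix n p α) :
    Xᴴ * A * X - Xᴴ * B - Bᴴ * X
      = X₀ᴴ * A * X₀ - X₀ᴴ * B - Bᴴ * X₀ + (X - X₀)ᴴ * A * (X - X₀) := by
  subst hX₀
  simp only [conjTranspose_sub, conjTranspose_mul, hA.eq, Matrix.sub_mul, Matrix.mul_sub,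
    Matrix.mul_assoc]
  abel

end Matrix

theorem wmmse_mse_eq_one_add_quadratic {ι r t d α : Type*} [Fintype ι] [DecidableEq ι]
    [Fintype r] [DecidableEq r] [Fintype t] [Fintype d] [DecidableEq d]
    [CommRing α] [StarRing α]
    (H : Matrix r t α) (V : ι → Matrix t d α) (k : ι) (c : α) (U : Matrix r d α) :
    (1 - Uᴴ * H * V k) * (1 - Uᴴ * H * V k)ᴴ
        + ∑ m ∈ univ.erase k, Uᴴ * H * V m * (V m)ᴴ * Hᴴ * U + c • (Uᴴ * U)
      = 1 + (Uᴴ * (c • 1 + ∑ m, H * V m * (V m)ᴴ * Hᴴ) * U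
          - Uᴴ * (H * V k) - (H * V k)ᴴ * U) := by
  rw [← add_sum_erase _ _ (mem_univ k), Matrix.mul_add, Matrix.mul_add, Matrix.add_mul,
    Matrix.add_mul, Matrix.mul_sum, Matrix.sum_mul]
  simp only [conjTranspose_sub, conjTranspose_one, conjTranspose_mul, conjTranspose_conjTranspose,
    Matrix.sub_mul, Matrix.mul_sub, Matrix.mul_one, Matrix.one_mul, Matrix.mul_smul,
    Matrix.smul_mul, Matrix.mul_assoc]
  abel

/-- Optimality of the `U`-update in the iterative WMMSE algorithm, via
completion of squares: with `A = cI + Σₘ H Vₘ Vₘᴴ Hᴴ` (Hermitian positive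
definite) and `U* = A⁻¹ H V_k`, the per-user MSE matrix satisfies
`E(U) = E(U*) + (U − U*)ᴴ A (U − U*)` for every `U`; consequently
`Re Tr(W·E(U)) ≥ Re Tr(W·E(U*))` for every Hermitian PSD `W`. -/
theorem wmmse_U_update_optimal (K Nt Nr d : ℕ)
    (H : Matrix (Fin Nr) (Fin Nt) ℂ) (V : Fin K → Matrix (Fin Nt) (Fin d) ℂ)
    (k : Fin K) (c : ℝ) (hc : 0 < c)
    (A : Matrix (Fin Nr) (Fin Nr) ℂ)
    (hA : A = (c : ℂ) • (1 : Matrix (Fin Nr) (Fin Nr) ℂ)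
        + ∑ m : Fin K, H * V m * (V m)ᴴ * Hᴴ)
    (E : Matrix (Fin Nr) (Fin d) ℂ → Matrix (Fin d) (Fin d) ℂ)
    (hE : ∀ U, E U = (1 - Uᴴ * H * V k) * (1 - Uᴴ * H * V k)ᴴ
        + ∑ m ∈ Finset.univ.erase k, Uᴴ * H * V m * (V m)ᴴ * Hᴴ * U
        + (c : ℂ) • (Uᴴ * U))
    (Ustar : Matrix (Fin Nr) (Fin d) ℂ) (hUstar : Ustar = A⁻¹ * H * V k) :
    A.PosDef ∧
    (∀ U : Matrix (Fin Nr) (Fin d) ℂ,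
      E U = E Ustar + (U - Ustar)ᴴ * A * (U - Ustar)) ∧
    (∀ W : Matrix (Fin d) (Fin d) ℂ, W.PosSemidef →
      ∀ U : Matrix (Fin Nr) (Fin d) ℂ,
        (Matrix.trace (W * E Ustar)).re ≤ (Matrix.trace (W * E U)).re) := by
  have hPD : A.PosDef := by
    simpa only [hA, conjTranspose_mul, Matrix.mul_assoc] using
      posDef_smul_one_add_sum_mul_conjTranspose (Complex.zero_lt_real.mpr hc) univ (H * V ·)
  have hAUstar : A * Ustar = H * V k := by
    rw [hUstar, Matrix.mul_assoc,
      mul_nonsing_inv_cancel_left _ _ (A.isUnit_iff_isUnit_det.mp hPD.isUnit)]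
  have hEU : ∀ U, E U = 1 + (Uᴴ * A * U - Uᴴ * (H * V k) - (H * V k)ᴴ * U) := fun U => by
    rw [hE, hA, wmmse_mse_eq_one_add_quadratic]
  have hsplit : ∀ U, E U = E Ustar + (U - Ustar)ᴴ * A * (U - Ustar) := fun U => by
    rw [hEU, hEU, hPD.isHermitian.complete_square hAUstar U, add_assoc]
  refine ⟨hPD, hsplit, fun W hW U => ?_⟩
  have hgap := hW.trace_mul_nonneg (hPD.posSemidef.conjTranspose_mul_mul_same (U - Ustar))
  rw [hsplit U, Matrix.mul_add, trace_add]
  exact (Complex.le_def.mp (le_add_of_nonneg_right hgap)).1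
end

section
/- (Optimality of the V-update in the iterative WMMSE algorithm, via completion of squares.) For k = 1,…,K let H_k ∈ ℂ^{N_r×N_t}, U_k ∈ ℂ^{N_r×d}, let W_k ∈ ℂ^{d×d} be Hermitian, and let ω_k > 0, σ_k > 0, P_T > 0 be reals. Set B = Σ_{k=1}^K (ω_k σ_k²/P_T) Re Tr(U_k W_k U_kᴴ) · I + Σ_{m=1}^K ω_m H_mᴴ U_m W_m U_mᴴ H_m ∈ ℂ^{N_t×N_t}, and assume B is invertible. For a K-tuple V = (V_1,…,V_K) with V_k ∈ ℂ^{N_t×d} define E_{2,k}(V) = (I − U_kᴴH_kV_k)(I − U_kᴴH_kV_k)ᴴ + Σ_{m≠k} U_kᴴH_kV_mV_mᴴH_kᴴU_k + (σ_k²/P_T)(Σ_{n=1}^K Re Tr(V_nV_nᴴ)) U_kᴴU_k, and g(V) = Σ_{k=1}^K ω_k Re Tr(W_k E_{2,k}(V)). Then, with V* = (V_1*,…,V_K*) where V_n* = ω_n B⁻¹ H_nᴴ U_n W_n, for every V one has g(V) = g(V*) + Σ_{n=1}^K Re Tr( (V_n − V_n*)ᴴ B (V_n − V_n*) ). In particular,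 if B is positive definite then V* is the unique global minimizer of g. -/
open Matrix Finset
open scoped Matrix ComplexOrder

/-!
Expanding the traces shows that `g` is a real quadratic function of `V`,
`g V = Σₖ ωₖ Re Tr Wₖ - 2 Σₙ Re Tr (Vₙᴴ B Vₙ*) + Σₙ Re Tr (Vₙᴴ B Vₙ)`:
the quadratic part collects the interference terms (the `m = k` one comes from
`(I - UₖᴴHₖVₖ)(I - UₖᴴHₖVₖ)ᴴ`) and the power-normalised noise term into `B`, and the linear
part is `ωₙ Re Tr (Vₙᴴ Hₙᴴ Uₙ Wₙ) = Re Tr (Vₙᴴ B Vₙ*)` because `B Vₙ* = ωₙ Hₙᴴ Uₙ Wₙ`.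
As `B` is Hermitian, completing the square gives the identity; when `B` is positive definite,
`Re Tr (Mᴴ B M) ≥ 0` with equality only at `M = 0`.
-/

namespace Matrix

variable {𝕜 : Type*} [RCLike 𝕜] {ι n m : Type*} [Fintype ι] [Fintype n] [Fintype m]

lemma re_trace_conjTranspose (M : Matrix n n 𝕜) :
    RCLike.re (trace Mᴴ) = RCLike.re (trace M) := by
  simp [trace_conjTranspose]

namespace IsHermitian

variable {B : Matrix n n 𝕜}

lemma re_trace_conjTranspose_mul_mul_comm (hB : B.IsHermitian) (X Y : Matrix n m 𝕜) :
    RCLike.re (trace (Yᴴ * B * X)) = RCLike.re (trace (Xᴴ * B * Y)) := by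
  rw [← re_trace_conjTranspose (Xᴴ * B * Y)]
  simp [conjTranspose_mul, hB.eq, Matrix.mul_assoc]

lemma re_trace_conjTranspose_sub_mul_mul_sub (hB : B.IsHermitian) (X Y : Matrix n m 𝕜) :
    RCLike.re (trace ((X - Y)ᴴ * B * (X - Y))) = RCLike.re (trace (Xᴴ * B * X))
      - 2 * RCLike.re (trace (Xᴴ * B * Y)) + RCLike.re (trace (Yᴴ * B * Y)) := by
  have hcomm := hB.re_trace_conjTranspose_mul_mul_comm X Y
  simp only [conjTranspose_sub, Matrix.sub_mul, Matrix.mul_sub, trace_sub, map_sub] at hcomm ⊢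
  linarith

lemma eq_add_sum_re_trace_of_eq_quadratic (hB : B.IsHermitian)
    {f : (ι → Matrix n m 𝕜) → ℝ} {c : ℝ} {Y : ι → Matrix n m 𝕜}
    (hf : ∀ X, f X = c - 2 * ∑ i, RCLike.re (trace ((X i)ᴴ * B * Y i))
      + ∑ i, RCLike.re (trace ((X i)ᴴ * B * X i)))
    (X : ι → Matrix n m 𝕜) :
    f X = f Y + ∑ i, RCLike.re (trace ((X i - Y i)ᴴ * B * (X i - Y i))) := by
  simp only [hf, hB.re_trace_conjTranspose_sub_mul_mul_sub, sum_add_distrib, sum_sub_distrib,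
    ← mul_sum]
  ring

end IsHermitian

namespace PosDef

variable {B : Matrix n n 𝕜}

lemma conjTranspose_mul_mul_eq_zero_iff (hB : B.PosDef) (M : Matrix n m 𝕜) :
    Mᴴ * B * M = 0 ↔ M = 0 := by
  refine ⟨fun h => ext_iff_mulVec.mpr fun v => ?_, fun h => by simp [h]⟩
  rw [zero_mulVec]
  by_contra hv
  have hpos := hB.dotProduct_mulVec_pos hv
  simp only [star_mulVec, dotProduct_mulVec, vecMul_vecMul, h, vecMul_zero, zero_dotProduct,
    lt_self_iff_false] at hpos

lemma re_trace_conjTranspose_mul_mul_nonneg (hB : B.PosDef) (M : Matrix n m 𝕜) :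
    0 ≤ RCLike.re (trace (Mᴴ * B * M)) :=
  (RCLike.nonneg_iff.mp (hB.posSemidef.conjTranspose_mul_mul_same M).trace_nonneg).1

lemma re_trace_conjTranspose_mul_mul_eq_zero_iff (hB : B.PosDef) (M : Matrix n m 𝕜) :
    RCLike.re (trace (Mᴴ * B * M)) = 0 ↔ M = 0 := by
  have hpsd := hB.posSemidef.conjTranspose_mul_mul_same M
  have him := (RCLike.nonneg_iff.mp hpsd.trace_nonneg).2
  rw [← hB.conjTranspose_mul_mul_eq_zero_iff, ← hpsd.trace_eq_zero_iff]
  exact ⟨fun hre => RCLike.ext (by simpa using hre) (by simpa using him), fun h => by simp [h]⟩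

lemma le_and_eq_of_eq_add_sum_re_trace (hB : B.PosDef) {a b : ℝ} {X Y : ι → Matrix n m 𝕜}
    (h : a = b + ∑ i, RCLike.re (trace ((X i - Y i)ᴴ * B * (X i - Y i)))) :
    b ≤ a ∧ (a = b → X = Y) := by
  have hnonneg : ∀ i ∈ univ, 0 ≤ RCLike.re (trace ((X i - Y i)ᴴ * B * (X i - Y i))) :=
    fun i _ => hB.re_trace_conjTranspose_mul_mul_nonneg _
  refine ⟨by linarith [sum_nonneg hnonneg], fun hab => funext fun i => ?_⟩
  have hzero := (sum_eq_zero_iff_of_nonneg hnonneg).mp (by linarith) i (mem_univ i)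
  exact sub_eq_zero.mp ((hB.re_trace_conjTranspose_mul_mul_eq_zero_iff _).mp hzero)

end PosDef

end Matrix

variable {ι n p r : Type*} [Fintype ι] [Fintype n] [Fintype p] [Fintype r]

lemma re_trace_conjTranspose_mul_smul_one_add_sum_mul [DecidableEq n] (a : ℝ) (ω : ι → ℝ)
    (M : ι → Matrix n n ℂ) (X : Matrix n p ℂ) :
    (trace (Xᴴ * ((a : ℂ) • 1 + ∑ i, (ω i : ℂ) • M i) * X)).re
      = a * (trace (X * Xᴴ)).re + ∑ i, ω i * (trace (Xᴴ * M i * X)).re := by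
  simp only [Matrix.mul_add, Matrix.add_mul, Matrix.mul_smul, Matrix.smul_mul, Matrix.mul_sum,
    Matrix.sum_mul, Matrix.mul_one, trace_add, trace_smul, trace_sum, Complex.add_re,
    Complex.re_sum, smul_eq_mul, Complex.re_ofReal_mul, trace_mul_comm Xᴴ X]

variable [DecidableEq ι] [DecidableEq p]

lemma re_trace_mul_mse {W : Matrix p p ℂ} (hW : W.IsHermitian) (A : Matrix p n ℂ)
    (V : ι → Matrix n p ℂ) (k : ι) :
    (trace (W * ((1 - A * V k) * (1 - A * V k)ᴴ
      + ∑ m ∈ univ.erase k, A * V m * (A * V m)ᴴ))).re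
    = (trace W).re - 2 * (trace ((V k)ᴴ * Aᴴ * W)).re
      + ∑ m, (trace ((V m)ᴴ * (Aᴴ * W * A) * V m)).re := by
  have hsum : (1 - A * V k) * (1 - A * V k)ᴴ + ∑ m ∈ univ.erase k, A * V m * (A * V m)ᴴ
      = 1 - A * V k - (A * V k)ᴴ + ∑ m, A * V m * (A * V m)ᴴ := by
    rw [← add_sum_erase _ _ (mem_univ k)]
    simp only [conjTranspose_sub, conjTranspose_one, Matrix.sub_mul, Matrix.mul_sub,
      Matrix.one_mul, Matrix.mul_one]
    abel
  have hlin : trace (W * (A * V k)) = star (trace ((V k)ᴴ * Aᴴ * W)) := by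
    rw [← trace_conjTranspose]
    simp [conjTranspose_mul, hW.eq, Matrix.mul_assoc]
  have hantilin : trace (W * (A * V k)ᴴ) = trace ((V k)ᴴ * Aᴴ * W) := by
    rw [conjTranspose_mul, trace_mul_comm]
  have hquad : ∀ X : Matrix n p ℂ,
      trace (W * (A * X * (A * X)ᴴ)) = trace (Xᴴ * (Aᴴ * W * A) * X) := by
    intro X
    rw [trace_mul_comm, conjTranspose_mul]
    simp only [Matrix.mul_assoc]
    rw [← Matrix.mul_assoc, trace_mul_comm]
    simp only [Matrix.mul_assoc]
  rw [hsum, Matrix.mul_add, Matrix.mul_sub, Matrix.mul_sub, Matrix.mul_one, Matrix.mul_sum,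
    trace_add, trace_sub, trace_sub, trace_sum, hlin, hantilin]
  simp only [Complex.add_re, Complex.sub_re, Complex.re_sum, hquad, Complex.star_def,
    Complex.conj_re]
  ring

lemma wmmse_objective_eq [DecidableEq n] (H : ι → Matrix r n ℂ) (U : ι → Matrix r p ℂ)
    {W : ι → Matrix p p ℂ} (hW : ∀ k, (W k).IsHermitian) (ω σ : ι → ℝ) (PT : ℝ)
    (V : ι → Matrix n p ℂ) :
    ∑ k, ω k * (trace (W k * ((1 - (U k)ᴴ * H k * V k) * (1 - (U k)ᴴ * H k * V k)ᴴ
        + ∑ m ∈ univ.erase k, (U k)ᴴ * H k * V m * (V m)ᴴ * (H k)ᴴ * U k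
        + ((σ k ^ 2 / PT * ∑ j, (trace (V j * (V j)ᴴ)).re : ℝ) : ℂ) • ((U k)ᴴ * U k)))).re
    = ∑ k, ω k * (trace (W k)).re
      - 2 * ∑ k, ω k * (trace ((V k)ᴴ * ((H k)ᴴ * U k * W k))).re
      + ∑ j, (trace ((V j)ᴴ
          * (((∑ k, ω k * σ k ^ 2 / PT * (trace (U k * W k * (U k)ᴴ)).re : ℝ) : ℂ) • 1
            + ∑ m, ((ω m : ℝ) : ℂ) • ((H m)ᴴ * U m * W m * (U m)ᴴ * H m)) * V j)).re := by
  set a : ℝ := ∑ k, ω k * σ k ^ 2 / PT * (trace (U k * W k * (U k)ᴴ)).re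
  set s : ℝ := ∑ j, (trace (V j * (V j)ᴴ)).re with hs
  have hterm : ∀ k, (trace (W k * ((1 - (U k)ᴴ * H k * V k) * (1 - (U k)ᴴ * H k * V k)ᴴ
        + ∑ m ∈ univ.erase k, (U k)ᴴ * H k * V m * (V m)ᴴ * (H k)ᴴ * U k
        + ((σ k ^ 2 / PT * s : ℝ) : ℂ) • ((U k)ᴴ * U k)))).re
      = (trace (W k)).re - 2 * (trace ((V k)ᴴ * ((H k)ᴴ * U k * W k))).re
        + ∑ m, (trace ((V m)ᴴ * ((H k)ᴴ * U k * W k * (U k)ᴴ * H k) * V m)).re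
        + σ k ^ 2 / PT * s * (trace (U k * W k * (U k)ᴴ)).re := by
    intro k
    have hinterf : ∑ m ∈ univ.erase k, (U k)ᴴ * H k * V m * (V m)ᴴ * (H k)ᴴ * U k
        = ∑ m ∈ univ.erase k, (U k)ᴴ * H k * V m * ((U k)ᴴ * H k * V m)ᴴ :=
      sum_congr rfl fun m _ => by simp [conjTranspose_mul, Matrix.mul_assoc]
    have hnoise : trace (W k * ((U k)ᴴ * U k)) = trace (U k * W k * (U k)ᴴ) := by
      rw [← Matrix.mul_assoc, trace_mul_cycle]
    rw [Matrix.mul_add, trace_add, Complex.add_re, hinterf, re_trace_mul_mse (hW k),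
      Matrix.mul_smul, trace_smul, hnoise, smul_eq_mul, Complex.re_ofReal_mul]
    simp [conjTranspose_mul, Matrix.mul_assoc]
  have hinterf : ∑ k, ω k * ∑ m, (trace ((V m)ᴴ * ((H k)ᴴ * U k * W k * (U k)ᴴ * H k) * V m)).re
      = ∑ j, ∑ m, ω m * (trace ((V j)ᴴ * ((H m)ᴴ * U m * W m * (U m)ᴴ * H m) * V j)).re := by
    simp only [mul_sum]
    exact sum_comm
  have hnoise : ∑ k, ω k * (σ k ^ 2 / PT * s * (trace (U k * W k * (U k)ᴴ)).re)
      = ∑ j, a * (trace (V j * (V j)ᴴ)).re := by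
    rw [← mul_sum, ← hs, sum_mul]
    exact sum_congr rfl fun k _ => by ring
  have hsignal : ∑ k, ω k * (2 * (trace ((V k)ᴴ * ((H k)ᴴ * U k * W k))).re)
      = 2 * ∑ k, ω k * (trace ((V k)ᴴ * ((H k)ᴴ * U k * W k))).re := by
    rw [mul_sum]
    exact sum_congr rfl fun k _ => by ring
  simp only [hterm, re_trace_conjTranspose_mul_smul_one_add_sum_mul]
  simp only [mul_add, mul_sub, sum_add_distrib, sum_sub_distrib]
  linarith

theorem wmmse_V_update_optimal_general (K Nt Nr d : ℕ)
    (H : Fin K → Matrix (Fin Nr) (Fin Nt) ℂ)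
    (U : Fin K → Matrix (Fin Nr) (Fin d) ℂ)
    (W : Fin K → Matrix (Fin d) (Fin d) ℂ) (hW : ∀ k, (W k).IsHermitian)
    (ω σ : Fin K → ℝ) (PT : ℝ)
    (B : Matrix (Fin Nt) (Fin Nt) ℂ)
    (hB : B = ((∑ k : Fin K,
          ω k * σ k ^ 2 / PT * (Matrix.trace (U k * W k * (U k)ᴴ)).re : ℝ) : ℂ)
            • (1 : Matrix (Fin Nt) (Fin Nt) ℂ)
        + ∑ m : Fin K, ((ω m : ℝ) : ℂ) • ((H m)ᴴ * U m * W m * (U m)ᴴ * H m))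
    (hBunit : IsUnit B)
    (E2 : Fin K → (Fin K → Matrix (Fin Nt) (Fin d) ℂ) → Matrix (Fin d) (Fin d) ℂ)
    (hE2 : ∀ k V, E2 k V
        = (1 - (U k)ᴴ * H k * V k) * (1 - (U k)ᴴ * H k * V k)ᴴ
        + ∑ m ∈ Finset.univ.erase k, (U k)ᴴ * H k * V m * (V m)ᴴ * (H k)ᴴ * U k
        + ((σ k ^ 2 / PT * ∑ n : Fin K, (Matrix.trace (V n * (V n)ᴴ)).re : ℝ) : ℂ)
            • ((U k)ᴴ * U k))
    (g : (Fin K → Matrix (Fin Nt) (Fin d) ℂ) → ℝ)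
    (hg : ∀ V, g V = ∑ k : Fin K, ω k * (Matrix.trace (W k * E2 k V)).re)
    (Vstar : Fin K → Matrix (Fin Nt) (Fin d) ℂ)
    (hVstar : ∀ n, Vstar n = ((ω n : ℝ) : ℂ) • (B⁻¹ * (H n)ᴴ * U n * W n)) :
    (∀ V : Fin K → Matrix (Fin Nt) (Fin d) ℂ,
      g V = g Vstar
        + ∑ n : Fin K, (Matrix.trace ((V n - Vstar n)ᴴ * B * (V n - Vstar n))).re) ∧
    (B.PosDef → ∀ V : Fin K → Matrix (Fin Nt) (Fin d) ℂ,
      g Vstar ≤ g V ∧ (g V = g Vstar → V = Vstar)) := by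
  have hBherm : B.IsHermitian := by
    rw [hB]
    simp [IsHermitian, conjTranspose_sum, conjTranspose_mul, (hW _).eq, Matrix.mul_assoc]
  have hBVstar : ∀ n, B * Vstar n = ((ω n : ℝ) : ℂ) • ((H n)ᴴ * U n * W n) := by
    intro n
    rw [hVstar, Matrix.mul_smul]
    simp only [Matrix.mul_assoc]
    rw [Matrix.mul_nonsing_inv_cancel_left B _ ((isUnit_iff_isUnit_det B).mp hBunit)]
  have hcross : ∀ V : Fin K → Matrix (Fin Nt) (Fin d) ℂ, ∀ n,
      (trace ((V n)ᴴ * B * Vstar n)).re = ω n * (trace ((V n)ᴴ * ((H n)ᴴ * U n * W n))).re := by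
    intro V n
    rw [Matrix.mul_assoc, hBVstar, Matrix.mul_smul, trace_smul, smul_eq_mul,
      Complex.re_ofReal_mul]
  have hobj : ∀ V, g V = ∑ k, ω k * (trace (W k)).re
      - 2 * ∑ n, (trace ((V n)ᴴ * B * Vstar n)).re + ∑ n, (trace ((V n)ᴴ * B * V n)).re := by
    intro V
    simp only [hg, hE2, hcross]
    rw [wmmse_objective_eq H U hW ω σ PT V, ← hB]
  have hsq := hBherm.eq_add_sum_re_trace_of_eq_quadratic hobj
  exact ⟨hsq, fun hpd V => hpd.le_and_eq_of_eq_add_sum_re_trace (hsq V)⟩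

/-- Optimality of the `V`-update in the iterative WMMSE algorithm, via
completion of squares: with
`B = Σₖ (ωₖσₖ²/P_T) Re Tr(Uₖ Wₖ Uₖᴴ)·I + Σₘ ωₘ Hₘᴴ Uₘ Wₘ Uₘᴴ Hₘ` invertible and
`Vₙ* = ωₙ B⁻¹ Hₙᴴ Uₙ Wₙ`, the weighted sum-MSE objective
`g(V) = Σₖ ωₖ Re Tr(Wₖ E_{2,k}(V))` satisfies
`g(V) = g(V*) + Σₙ Re Tr((Vₙ − Vₙ*)ᴴ B (Vₙ − Vₙ*))`; in particular, if `B` is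
positive definite then `V*` is the unique global minimizer of `g`. -/
theorem wmmse_V_update_optimal (K Nt Nr d : ℕ)
    (H : Fin K → Matrix (Fin Nr) (Fin Nt) ℂ)
    (U : Fin K → Matrix (Fin Nr) (Fin d) ℂ)
    (W : Fin K → Matrix (Fin d) (Fin d) ℂ) (hW : ∀ k, (W k).IsHermitian)
    (ω σ : Fin K → ℝ) (PT : ℝ)
    (hω : ∀ k, 0 < ω k) (hσ : ∀ k, 0 < σ k) (hPT : 0 < PT)
    (B : Matrix (Fin Nt) (Fin Nt) ℂ)
    (hB : B = ((∑ k : Fin K,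
          ω k * σ k ^ 2 / PT * (Matrix.trace (U k * W k * (U k)ᴴ)).re : ℝ) : ℂ)
            • (1 : Matrix (Fin Nt) (Fin Nt) ℂ)
        + ∑ m : Fin K, ((ω m : ℝ) : ℂ) • ((H m)ᴴ * U m * W m * (U m)ᴴ * H m))
    (hBunit : IsUnit B)
    (E2 : Fin K → (Fin K → Matrix (Fin Nt) (Fin d) ℂ) → Matrix (Fin d) (Fin d) ℂ)
    (hE2 : ∀ k V, E2 k V
        = (1 - (U k)ᴴ * H k * V k) * (1 - (U k)ᴴ * H k * V k)ᴴ
        + ∑ m ∈ Finset.univ.erase k, (U k)ᴴ * H k * V m * (V m)ᴴ * (H k)ᴴ * U k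
        + ((σ k ^ 2 / PT * ∑ n : Fin K, (Matrix.trace (V n * (V n)ᴴ)).re : ℝ) : ℂ)
            • ((U k)ᴴ * U k))
    (g : (Fin K → Matrix (Fin Nt) (Fin d) ℂ) → ℝ)
    (hg : ∀ V, g V = ∑ k : Fin K, ω k * (Matrix.trace (W k * E2 k V)).re)
    (Vstar : Fin K → Matrix (Fin Nt) (Fin d) ℂ)
    (hVstar : ∀ n, Vstar n = ((ω n : ℝ) : ℂ) • (B⁻¹ * (H n)ᴴ * U n * W n)) :
    (∀ V : Fin K → Matrix (Fin Nt) (Fin d) ℂ,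
      g V = g Vstar
        + ∑ n : Fin K, (Matrix.trace ((V n - Vstar n)ᴴ * B * (V n - Vstar n))).re) ∧
    (B.PosDef → ∀ V : Fin K → Matrix (Fin Nt) (Fin d) ℂ,
      g Vstar ≤ g V ∧ (g V = g Vstar → V = Vstar)) :=
  wmmse_V_update_optimal_general K Nt Nr d H U W hW ω σ PT B hB hBunit E2 hE2 g hg Vstar hVstar
end
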